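/- Let U = {z_1,…,z_n} be a universe, let S_1,…,S_t be subsets of U, and let k be an integer with 3 < k ≤ t. For each i ∈ [n] let f_i = |{j ∈ [t] : z_i ∈ S_j}|, and assume t − f_i − k > 3k for every i ∈ [n]. Fix the candidate set C = {x_1,…,x_n, y}. Let G_1,…,G_t and H be profiles over C such that: for each j ∈ [t] and i ∈ [n], D_{G_j}(y, x_i) = 2 if z_i ∉ S_j and D_{G_j}(y, x_i) = 0 otherwise, with D_{G_j}(x_i, x_ℓ) = 0 for all distinct i, ℓ ∈ [n]; and D_H(x_i, y) = 2(t − f_i − k) for every i ∈ [n], with D_H(x_i, x_ℓ) = 0 for all distinct i, ℓ ∈ [n] (such profiles exist). Then the Optimal Defense instance (C, {G_1,…,G_t, H}, k_a = k, k_d = t − k) for the Condorcet voting rule is a Yes instance if and only if there exists an index set I ⊆ [t] with |I| = k and ⋃_{j∈I} S_j = U (i.e., the Set Cover instance (U, {S_1,…,S_t}, k) is a Yes instance). -/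

import Mathlib

open Finset

/-- A vote over a candidate set `C` with `m` candidates: a ranking assigning each
candidate its position. -/
abbrev Vote (C : Type*) (m : ℕ) := C ≃ Fin m

/-- The score of candidate `x` in profile `P` under score vector `α`. -/
def score {C : Type*} {m : ℕ} (α : Fin m → ℝ) (P : Multiset (Vote C m)) (x : C) : ℝ :=
  (P.map fun v => α (v x)).sum

/-- The scoring rule of `α`: the set of candidates with maximum score. -/
def scoringRule {C : Type*} {m : ℕ} (α : Fin m → ℝ) (P : Multiset (Vote C m)) : Set C :=
  {x | ∀ y, score α P y ≤ score α P x}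

/-- `margin P x y`: number of votes preferring `x` to `y` minus those preferring `y` to `x`. -/
def margin {C : Type*} {m : ℕ} (P : Multiset (Vote C m)) (x y : C) : ℤ :=
  ((P.filter fun v => v x < v y).card : ℤ) - ((P.filter fun v => v y < v x).card : ℤ)

/-- `c` is the Condorcet winner of `P`. -/
def CondorcetWinner {C : Type*} {m : ℕ} (P : Multiset (Vote C m)) (c : C) : Prop :=
  ∀ y, y ≠ c → 0 < margin P c y

/-- The Condorcet voting rule: `{c}` if a Condorcet winner `c` exists, all candidates otherwise. -/
def condorcetRule {C : Type*} {m : ℕ} (P : Multiset (Vote C m)) : Set C :=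
  {x | CondorcetWinner P x ∨ ¬ ∃ c, CondorcetWinner P c}

/-- `α` is monotone nonincreasing (part of being a score vector). -/
def IsMonotoneScore {m : ℕ} (α : Fin m → ℝ) : Prop :=
  ∀ i j : Fin m, i ≤ j → α j ≤ α i

/-- `α` is normalized: some consecutive difference is `1` and all later entries are `0`. -/
def IsNormalized {m : ℕ} (α : Fin m → ℝ) : Prop :=
  ∃ j : ℕ, ∃ hj : j + 1 < m, α ⟨j, Nat.lt_of_succ_lt hj⟩ - α ⟨j + 1, hj⟩ = 1 ∧
    ∀ ℓ : Fin m, j < (ℓ : ℕ) → α ℓ = 0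

/-- `Q` is a profile `P_u^v`: it has `m` votes and
`s_Q(u) + 1 = s_Q(v) - 1 = s_Q(z)` for every `z ∉ {u, v}`. -/
def PfGood {C : Type*} {m : ℕ} (α : Fin m → ℝ) (Q : Multiset (Vote C m)) (u v : C) : Prop :=
  Multiset.card Q = m ∧ score α Q u + 1 = score α Q v - 1 ∧
    ∀ z : C, z ≠ u → z ≠ v → score α Q z = score α Q v - 1

/-- The Optimal Defense instance with groups `G`, attacker resource `ka` and defender
resource `kd` is a Yes instance for voting rule `r`. -/
def DefenseYes {C : Type*} {m N : ℕ} (r : Multiset (Vote C m) → Set C)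
    (G : Fin N → Multiset (Vote C m)) (ka kd : ℕ) : Prop :=
  ∃ I : Finset (Fin N), I.card ≤ kd ∧
    ∀ I' : Finset (Fin N), Disjoint I I' → I'.card ≤ ka →
      r (∑ i ∈ Finset.univ \ I', G i) = r (∑ i, G i)

/-- The Optimal Attack instance with groups `G`, attacker resource `ka` and defender
resource `kd` is a Yes instance for voting rule `r`. -/
def AttackYes {C : Type*} {m N : ℕ} (r : Multiset (Vote C m) → Set C)
    (G : Fin N → Multiset (Vote C m)) (ka kd : ℕ) : Prop :=
  ∃ I : Finset (Fin N), I.card ≤ ka ∧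
    ∀ I' : Finset (Fin N), I'.card ≤ kd →
      r (∑ i ∈ Finset.univ \ (I \ I'), G i) ≠ r (∑ i, G i)

/-!
In the whole election `y` beats every `x i` by exactly `2k`: the groups `G j` with `z_i ∉ S_j`
give `2 (t - f i)`, and `H` takes back `2 (t - f i - k)`. Hence the defence succeeds iff no
admissible attack removes groups whose margins of `y` over some `x i` sum to `2k` or more. A group
`G j` contributes `2` exactly when it misses `z_i`, and `H` contributes a nonpositive amount.
Protecting everything outside a cover of size `k` leaves the attacker at most `k - 1` groups
missing any given `z_i`. Conversely, if at most `t - k` groups are protected, the attacker can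
remove any `k` unprotected `G j`, so these must cover the universe.
-/

section Margin

variable {C : Type*} {m : ℕ}

lemma margin_add (P Q : Multiset (Vote C m)) (u v : C) :
    margin (P + Q) u v = margin P u v + margin Q u v := by
  simp only [margin, Multiset.filter_add, Multiset.card_add, Nat.cast_add]
  ring

lemma margin_sum {ι : Type*} (s : Finset ι) (P : ι → Multiset (Vote C m)) (u v : C) :
    margin (∑ a ∈ s, P a) u v = ∑ a ∈ s, margin (P a) u v :=
  map_sum (AddMonoidHom.mk' (fun Q => margin Q u v) fun P Q => margin_add P Q u v) P s

lemma margin_swap (P : Multiset (Vote C m)) (u v : C) : margin P u v = -margin P v u := by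
  simp [margin]

lemma margin_sum_compl {ι : Type*} [Fintype ι] [DecidableEq ι] (P : ι → Multiset (Vote C m))
    (s : Finset ι) (u v : C) :
    margin (∑ a ∈ univ \ s, P a) u v =
      margin (∑ a, P a) u v - ∑ a ∈ s, margin (P a) u v := by
  rw [margin_sum, margin_sum, eq_sub_iff_add_eq, sum_sdiff (subset_univ s)]

end Margin

section CondorcetRule

variable {C : Type*} {m : ℕ} {P : Multiset (Vote C m)} {c : C}

lemma CondorcetWinner.unique {d : C} (hc : CondorcetWinner P c) (hd : CondorcetWinner P d) :
    c = d := by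
  by_contra hcd
  have h₁ := hc d (Ne.symm hcd)
  have h₂ := hd c hcd
  rw [margin_swap] at h₂
  omega

lemma condorcetRule_eq_singleton_iff : condorcetRule P = {c} ↔ CondorcetWinner P c := by
  refine ⟨fun h => ?_, fun hc => ?_⟩
  · by_cases hex : ∃ d, CondorcetWinner P d
    · obtain ⟨d, hd⟩ := hex
      have hd_mem : d ∈ condorcetRule P := Or.inl hd
      rw [h] at hd_mem
      rwa [Set.mem_singleton_iff.mp hd_mem] at hd
    · -- with no Condorcet winner the rule selects everyone, so `c` is the only candidate
      intro z hz
      have hz_mem : z ∈ condorcetRule P := Or.inr hex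
      exact absurd (Set.mem_singleton_iff.mp (h ▸ hz_mem)) hz
  · ext z
    exact ⟨fun hz => hz.elim (fun hz => hz.unique hc) (absurd ⟨c, hc⟩),
      fun hz => Or.inl (Set.mem_singleton_iff.mp hz ▸ hc)⟩

lemma condorcetWinner_sum_compl_iff {ι : Type*} [Fintype ι] [DecidableEq ι]
    (G : ι → Multiset (Vote C m)) (s : Finset ι) (c : C) :
    CondorcetWinner (∑ a ∈ univ \ s, G a) c ↔
      ∀ z, z ≠ c → ∑ a ∈ s, margin (G a) c z < margin (∑ a, G a) c z := by
  simp only [CondorcetWinner, margin_sum_compl, sub_pos]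

lemma defenseYes_condorcetRule_iff {N : ℕ} {G : Fin N → Multiset (Vote C m)} (ka kd : ℕ)
    (hc : CondorcetWinner (∑ a, G a) c) :
    DefenseYes condorcetRule G ka kd ↔ ∃ I : Finset (Fin N), #I ≤ kd ∧
      ∀ I' : Finset (Fin N), Disjoint I I' → #I' ≤ ka →
        ∀ z, z ≠ c → ∑ a ∈ I', margin (G a) c z < margin (∑ a, G a) c z := by
  simp only [DefenseYes, condorcetRule_eq_singleton_iff.mpr hc, condorcetRule_eq_singleton_iff,
    condorcetWinner_sum_compl_iff]

end CondorcetRule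

lemma forall_ne_iff_forall_of_card_eq_succ {C : Type*} [Fintype C] {n : ℕ}
    (hC : Fintype.card C = n + 1) {x : Fin n → C} (hx : Function.Injective x) {y : C}
    (hxy : ∀ i, x i ≠ y) {p : C → Prop} : (∀ z, z ≠ y → p z) ↔ ∀ i, p (x i) := by
  classical
  have hrange : univ.image x = univ.erase y := by
    refine eq_of_subset_of_card_le (fun z hz => ?_) ?_
    · obtain ⟨i, -, rfl⟩ := mem_image.mp hz
      exact mem_erase.mpr ⟨hxy i, mem_univ _⟩
    · rw [card_erase_of_mem (mem_univ y), card_univ, hC, card_image_of_injective _ hx,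
        card_univ, Fintype.card_fin, Nat.add_sub_cancel]
  refine ⟨fun h i => h _ (hxy i), fun h z hz => ?_⟩
  have hz' : z ∈ univ.image x := hrange ▸ mem_erase.mpr ⟨hz, mem_univ z⟩
  obtain ⟨i, -, rfl⟩ := mem_image.mp hz'
  exact h i

lemma Fin.sum_finset_eq_sum_castSucc_add {M : Type*} [AddCommMonoid M] {t : ℕ}
    (s : Finset (Fin (t + 1))) (g : Fin (t + 1) → M) :
    ∑ a ∈ s, g a = ∑ j ∈ univ.filter (fun j => Fin.castSucc j ∈ s), g j.castSucc +
      if Fin.last t ∈ s then g (Fin.last t) else 0 := by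
  rw [sum_filter, ← Fin.sum_univ_castSucc fun a => if a ∈ s then g a else 0, sum_ite_mem,
    univ_inter]

lemma sum_ite_zero_two {ι : Type*} (s : Finset ι) (p : ι → Prop) [DecidablePred p] :
    ∑ j ∈ s, (if p j then 0 else 2 : ℤ) = 2 * #{j ∈ s | ¬p j} := by
  rw [sum_ite, sum_const_zero, sum_const, zero_add, nsmul_eq_mul, mul_comm]

section SetCover

variable {n t k : ℕ} (S : Fin t → Finset (Fin n)) {w : Fin n → Fin (t + 1) → ℤ}

lemma exists_cover_of_defense (hkt : k ≤ t)
    (hw : ∀ i j, w i j.castSucc = if i ∈ S j then 0 else 2) {I : Finset (Fin (t + 1))}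
    (hI : #I ≤ t - k)
    (hdef : ∀ I' : Finset (Fin (t + 1)), Disjoint I I' → #I' ≤ k →
      ∀ i, ∑ a ∈ I', w i a < 2 * k) :
    ∃ B : Finset (Fin t), #B = k ∧ ∀ u, ∃ j ∈ B, u ∈ S j := by
  have hprotected : #{j : Fin t | j.castSucc ∈ I} ≤ #I :=
    card_le_card_of_injOn Fin.castSucc (fun j hj => (mem_filter.mp hj).2)
      (Fin.castSucc_injective _).injOn
  have hfree : k ≤ #{j : Fin t | j.castSucc ∉ I} := by
    have := card_filter_add_card_filter_not (s := univ) fun j : Fin t => j.castSucc ∈ I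
    rw [card_univ, Fintype.card_fin] at this
    omega
  obtain ⟨B, hBfree, hB⟩ := exists_subset_card_eq hfree
  refine ⟨B, hB, fun u => ?_⟩
  by_contra! hmiss
  have hdisj : Disjoint I (B.map Fin.castSuccEmb) := disjoint_right.mpr fun a ha => by
    obtain ⟨j, hj, rfl⟩ := mem_map.mp ha
    exact (mem_filter.mp (hBfree hj)).2
  have hattack := hdef _ hdisj (by rw [card_map, hB]) u
  rw [sum_map] at hattack
  simp only [Fin.coe_castSuccEmb, hw, sum_ite_zero_two, filter_true_of_mem hmiss, hB] at hattack
  exact lt_irrefl _ hattack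

lemma defense_of_cover (hw : ∀ i j, w i j.castSucc = if i ∈ S j then 0 else 2)
    (hlast : ∀ i, w i (Fin.last t) ≤ 0) {I₀ : Finset (Fin t)} (hI₀ : #I₀ = k)
    (hcover : ∀ u, ∃ j ∈ I₀, u ∈ S j) :
    ∃ I : Finset (Fin (t + 1)), #I ≤ t - k ∧
      ∀ I' : Finset (Fin (t + 1)), Disjoint I I' → ∀ i, ∑ a ∈ I', w i a < 2 * k := by
  refine ⟨I₀ᶜ.map Fin.castSuccEmb, by simp [card_compl, hI₀], fun I' hdisj i => ?_⟩
  obtain ⟨j₀, hj₀, hij₀⟩ := hcover i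
  set J : Finset (Fin t) := {j | j.castSucc ∈ I'}
  have hmissing : {j ∈ J | i ∉ S j} ⊆ I₀.erase j₀ := fun j hj => by
    simp only [J, mem_filter, mem_univ, true_and] at hj
    refine mem_erase.mpr ⟨fun h => hj.2 (h ▸ hij₀), ?_⟩
    by_contra hj'
    exact disjoint_left.mp hdisj (mem_map_of_mem _ (mem_compl.mpr hj')) hj.1
  have hlt := (card_le_card hmissing).trans_lt (card_erase_lt_of_mem hj₀)
  calc ∑ a ∈ I', w i a ≤ ∑ j ∈ J, w i j.castSucc := by
        rw [Fin.sum_finset_eq_sum_castSucc_add]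
        split_ifs
        · exact add_le_of_nonpos_right (hlast i)
        · rw [add_zero]
    _ = 2 * #{j ∈ J | i ∉ S j} := by simp only [hw, sum_ite_zero_two]
    _ < 2 * k := by omega

lemma defense_iff_exists_cover (hkt : k ≤ t)
    (hw : ∀ i j, w i j.castSucc = if i ∈ S j then 0 else 2)
    (hlast : ∀ i, w i (Fin.last t) ≤ 0) :
    (∃ I : Finset (Fin (t + 1)), #I ≤ t - k ∧ ∀ I' : Finset (Fin (t + 1)), Disjoint I I' →
      #I' ≤ k → ∀ i, ∑ a ∈ I', w i a < 2 * k) ↔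
      ∃ B : Finset (Fin t), #B = k ∧ ∀ u, ∃ j ∈ B, u ∈ S j := by
  refine ⟨fun ⟨I, hI, hdef⟩ => exists_cover_of_defense S hkt hw hI hdef,
    fun ⟨I₀, hI₀, hcover⟩ => ?_⟩
  obtain ⟨I, hI, hdef⟩ := defense_of_cover S hw hlast hI₀ hcover
  exact ⟨I, hI, fun I' hdisj _ => hdef I' hdisj⟩

end SetCover

theorem stmt11_general (n t : ℕ) (S : Fin t → Finset (Fin n)) (k : ℕ) (hk3 : 3 < k) (hkt : k ≤ t)
    (f : Fin n → ℕ) (hf : ∀ i, f i = (Finset.univ.filter (fun j => i ∈ S j)).card)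
    (hbig : ∀ i, 3 * k < t - f i - k)
    {C : Type} [Fintype C] (hC : Fintype.card C = n + 1)
    (x : Fin n → C) (hxinj : Function.Injective x) (y : C) (hxy : ∀ i, x i ≠ y)
    (G : Fin t → Multiset (Vote C (n + 1))) (H : Multiset (Vote C (n + 1)))
    (hGyx : ∀ j i, margin (G j) y (x i) = if i ∈ S j then 0 else 2)
    (hHxy : ∀ i, margin H (x i) y = 2 * ((t - f i - k : ℕ) : ℤ)) :
    DefenseYes condorcetRule (Fin.snoc G H) k (t - k) ↔
    ∃ I : Finset (Fin t), I.card = k ∧ ∀ u : Fin n, ∃ j ∈ I, u ∈ S j := by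
  set GH : Fin (t + 1) → Multiset (Vote C (n + 1)) := Fin.snoc G H
  have hG : ∀ i j, margin (GH j.castSucc) y (x i) = if i ∈ S j then 0 else 2 := by
    simp [GH, hGyx]
  have hH : ∀ i, margin (GH (Fin.last t)) y (x i) = -(2 * ((t - f i - k : ℕ) : ℤ)) := by
    simp [GH, margin_swap H y, hHxy]
  have htotal : ∀ i, margin (∑ a, GH a) y (x i) = 2 * k := fun i => by
    have hmissing := card_filter_add_card_filter_not (s := univ) fun j : Fin t => i ∈ S j
    rw [card_univ, Fintype.card_fin, ← hf] at hmissing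
    rw [margin_sum, Fin.sum_univ_castSucc, hH]
    simp only [hG, sum_ite_zero_two]
    have := hbig i
    omega
  have hwin : CondorcetWinner (∑ a, GH a) y :=
    (forall_ne_iff_forall_of_card_eq_succ hC hxinj hxy).mpr fun i => by rw [htotal]; omega
  rw [defenseYes_condorcetRule_iff k (t - k) hwin]
  simp only [forall_ne_iff_forall_of_card_eq_succ hC hxinj hxy, htotal]
  exact defense_iff_exists_cover S hkt hG fun i => by
    rw [hH, neg_nonpos]
    positivity

/-- the Set Cover reduction instance for Optimal Defense under the
Condorcet voting rule. -/
theorem stmt11 (n t : ℕ) (S : Fin t → Finset (Fin n)) (k : ℕ) (hk3 : 3 < k) (hkt : k ≤ t)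
    (f : Fin n → ℕ) (hf : ∀ i, f i = (Finset.univ.filter (fun j => i ∈ S j)).card)
    (hbig : ∀ i, 3 * k < t - f i - k)
    {C : Type} [Fintype C] [DecidableEq C] (hC : Fintype.card C = n + 1)
    (x : Fin n → C) (hxinj : Function.Injective x) (y : C) (hxy : ∀ i, x i ≠ y)
    (G : Fin t → Multiset (Vote C (n + 1))) (H : Multiset (Vote C (n + 1)))
    (hGyx : ∀ j i, margin (G j) y (x i) = if i ∈ S j then 0 else 2)
    (hGxx : ∀ j i l, i ≠ l → margin (G j) (x i) (x l) = 0)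
    (hHxy : ∀ i, margin H (x i) y = 2 * ((t - f i - k : ℕ) : ℤ))
    (hHxx : ∀ i l, i ≠ l → margin H (x i) (x l) = 0) :
    DefenseYes condorcetRule (Fin.snoc G H) k (t - k) ↔
    ∃ I : Finset (Fin t), I.card = k ∧ ∀ u : Fin n, ∃ j ∈ I, u ∈ S j :=
  stmt11_general n t S k hk3 hkt f hf hbig hC x hxinj y hxy G H hGyx hHxy
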